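/- If λ is a partition whose remnant has nim-sum 0 (a P-position of RIT) and the opponent makes an RIT-move reducing an even-numbered row 2i by k, then reducing row 2i-1 of the resulting position by k is a valid RIT-move that returns to a position whose remnant is the same, hence again has nim-sum 0. -/

import Mathlib

/-- The `j`-th part (0-indexed) of a partition given as a list, `0` beyond the end. -/
def part (l : List ℕ) (j : ℕ) : ℕ := l.getD j 0

/-- A partition: a nonincreasing list of positive integers. -/
def IsPartition (l : List ℕ) : Prop :=
  l.Chain' (· ≥ ·) ∧ ∀ x ∈ l, 0 < x

/-- RIT move: replace the part at (0-indexed) position `i` by a smaller value `v`,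
keeping the sequence nonincreasing, then drop the (trailing) zeros. -/
def RitMove (l l' : List ℕ) : Prop :=
  ∃ i v, i < l.length ∧ v < part l i ∧ (l.set i v).Chain' (· ≥ ·) ∧
    l' = (l.set i v).filter (fun x => x ≠ 0)

/-- RIT move on an odd-numbered row (1-indexed), i.e. an even 0-indexed position. -/
def RitMoveOdd (l l' : List ℕ) : Prop :=
  ∃ i v, i < l.length ∧ i % 2 = 0 ∧ v < part l i ∧ (l.set i v).Chain' (· ≥ ·) ∧
    l' = (l.set i v).filter (fun x => x ≠ 0)

/-- RIT move on an even-numbered row (1-indexed), i.e. an odd 0-indexed position. -/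
def RitMoveEven (l l' : List ℕ) : Prop :=
  ∃ i v, i < l.length ∧ i % 2 = 1 ∧ v < part l i ∧ (l.set i v).Chain' (· ≥ ·) ∧
    l' = (l.set i v).filter (fun x => x ≠ 0)

/-- `core λ = (λ₂, λ₂, λ₄, λ₄, …)` (1-indexed parts), as a `0`-padded sequence. -/
def core (l : List ℕ) : ℕ → ℕ := fun j => part l (2 * (j / 2) + 1)

/-- `rem λ = (λ₁ - λ₂, λ₃ - λ₄, …)` (1-indexed parts), as a `0`-padded sequence. -/
def rem (l : List ℕ) : ℕ → ℕ := fun i => part l (2 * i) - part l (2 * i + 1)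

/-- A Nim move strictly decreases exactly one coordinate. -/
def NimMove (p q : ℕ → ℕ) : Prop := ∃ i, q i < p i ∧ ∀ j, j ≠ i → q j = p j

/-- The nim-sum (bitwise XOR) of the remnant of `l`:
`(λ₁ - λ₂) ⊕ (λ₃ - λ₄) ⊕ ⋯ ⊕ (λ_{2⌈r/2⌉-1} - λ_{2⌈r/2⌉})`. -/
def nimSum (l : List ℕ) : ℕ :=
  (List.ofFn (fun i : Fin ((l.length + 1) / 2) => rem l i)).foldr (· ^^^ ·) 0

/-- The minimal excludant of a set of naturals. -/
noncomputable def mexOf (S : Set ℕ) : ℕ := sInf {n | n ∉ S}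

/-- `G` is the (normal play) Sprague-Grundy function of RIT. -/
def IsRitGrundy (G : List ℕ → ℕ) : Prop :=
  ∀ l, IsPartition l → G l = mexOf {n | ∃ l', RitMove l l' ∧ G l' = n}

/-- `G` is the misère Grundy function of RIT (value `1` at the terminal position). -/
def IsRitMisereGrundy (G : List ℕ → ℕ) : Prop :=
  G [] = 1 ∧ ∀ l, IsPartition l → l ≠ [] →
    G l = mexOf {n | ∃ l', RitMove l l' ∧ G l' = n}

/-- `G` is the misère Grundy function of Nim on `0`-padded sequences of heaps. -/
def IsNimMisereGrundy (G : (ℕ → ℕ) → ℕ) : Prop :=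
  (∀ p : ℕ → ℕ, (∀ i, p i = 0) → G p = 1) ∧
  (∀ p : ℕ → ℕ, (Function.support p).Finite → (∃ i, p i ≠ 0) →
    G p = mexOf {n | ∃ q, NimMove p q ∧ G q = n})

/-- `P` is the set of P-positions of RIT under normal play. -/
def IsRitP (P : List ℕ → Prop) : Prop :=
  ∀ l, IsPartition l → (P l ↔ ∀ l', RitMove l l' → ¬ P l')

/-!
Lowering rows `2i - 1` and `2i` of a partition by the same `k` leaves every difference
`λ_{2j-1} - λ_{2j}` unchanged, so the remnant, and with it the nim-sum, is restored. The reply is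
legal because `λ_{2i} - k ≤ λ_{2i-1} - k ≤ λ_{2i-1} ≤ λ_{2i-2}`. All bookkeeping is done on the
`0`-padded sequence of parts, on which a move is a `Function.update` and deleting the trailing
zeros has no effect.
-/

open Function

section Parts

variable {l : List ℕ} {j : ℕ}

lemma part_eq_zero_of_length_le (h : l.length ≤ j) : part l j = 0 :=
  List.getD_eq_default l 0 h

lemma lt_length_of_part_pos (h : 0 < part l j) : j < l.length :=
  lt_of_not_ge fun hj => h.ne' (part_eq_zero_of_length_le hj)

lemma part_set (v : ℕ) (hj : j < l.length) : part (l.set j v) = update (part l) j v := by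
  funext n
  simp only [part, List.getD_eq_getElem?_getD, List.getElem?_set, update_apply]
  by_cases hn : n = j
  · simp [hn, hj]
  · simp [hn, Ne.symm hn]

/-- The padding value `0` lies below every part, so no condition at the end of the list is lost. -/
lemma isChain_ge_iff_antitone_part : l.IsChain (· ≥ ·) ↔ Antitone (part l) := by
  rw [List.isChain_iff_getElem]
  refine ⟨fun h => antitone_nat_of_succ_le fun t => ?_, fun h t ht => ?_⟩
  · rcases lt_or_ge (t + 1) l.length with ht | ht
    · rw [part, List.getD_eq_getElem _ _ ht, part, List.getD_eq_getElem _ _ (by omega)]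
      exact h t ht
    · simp [part_eq_zero_of_length_le ht]
  · have := h (Nat.le_succ t)
    rwa [part, List.getD_eq_getElem _ _ ht, part, List.getD_eq_getElem _ _ (by omega)] at this

/-- In a nonincreasing list of naturals the zeros form a suffix, so deleting them does not change
the `0`-padded sequence of parts. -/
lemma part_filter_ne_zero (hl : l.IsChain (· ≥ ·)) : part (l.filter (fun x => x ≠ 0)) = part l := by
  induction l with
  | nil => rfl
  | cons x t ih =>
    by_cases hx : x = 0
    · subst hx
      have hnil : (0 :: t).filter (fun x => x ≠ 0) = [] := by
        have := List.pairwise_cons.1 (List.isChain_iff_pairwise.1 hl)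
        simpa [List.filter_eq_nil_iff] using this.1
      funext n
      have := isChain_ge_iff_antitone_part.1 hl (Nat.zero_le n)
      simp only [hnil, part, List.getD_nil, List.getD_cons_zero] at this ⊢
      omega
    · rw [List.filter_cons_of_pos (by simpa using hx)]
      funext n
      cases n with
      | zero => rfl
      | succ n => exact congrFun (ih (List.isChain_cons.1 hl).2) n

end Parts

lemma Antitone.update_nat {α : Type*} [Preorder α] {f : ℕ → α} (hf : Antitone f) {j : ℕ} {v : α}
    (hle : v ≤ f j) (hge : f (j + 1) ≤ v) : Antitone (update f j v) := by
  refine antitone_nat_of_succ_le fun n => ?_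
  rcases eq_or_ne n j with rfl | hn
  · simpa using hge
  rcases eq_or_ne (n + 1) j with rfl | hn'
  · simpa [hn] using hle.trans (hf n.le_succ)
  · simpa [hn, hn'] using hf n.le_succ

lemma isChain_ge_set {l : List ℕ} (hl : l.IsChain (· ≥ ·)) {j v : ℕ} (hj : j < l.length)
    (hle : v ≤ part l j) (hge : part l (j + 1) ≤ v) : (l.set j v).IsChain (· ≥ ·) := by
  rw [isChain_ge_iff_antitone_part, part_set v hj]
  exact (isChain_ge_iff_antitone_part.1 hl).update_nat hle hge

lemma rem_eq_of_part_eq_sub_rows {l l' : List ℕ} {i k : ℕ} (hk : k ≤ part l (2 * i + 1))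
    (h : part l' = update (update (part l) (2 * i + 1) (part l (2 * i + 1) - k)) (2 * i)
      (part l (2 * i) - k)) :
    rem l' = rem l := by
  funext j
  simp only [rem, h, update_apply]
  rcases eq_or_ne j i with rfl | hj <;> split_ifs <;> omega

lemma foldr_xor_ofFn_eq_of_le (g : ℕ → ℕ) {N M : ℕ} (hNM : N ≤ M) (hg : ∀ j, N ≤ j → g j = 0) :
    (List.ofFn fun i : Fin M => g i).foldr (· ^^^ ·) 0 =
      (List.ofFn fun i : Fin N => g i).foldr (· ^^^ ·) 0 := by
  induction M, hNM using Nat.le_induction with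
  | base => rfl
  | succ M hNM ih =>
    rw [List.ofFn_succ', List.concat_eq_append, List.foldr_concat]
    simpa [hg M hNM] using ih

lemma rem_eq_zero_of_le {l : List ℕ} {j : ℕ} (h : (l.length + 1) / 2 ≤ j) : rem l j = 0 := by
  simp [rem, part_eq_zero_of_length_le (by omega : l.length ≤ 2 * j)]

lemma nimSum_eq_of_rem_eq {l l' : List ℕ} (h : rem l' = rem l) : nimSum l' = nimSum l := by
  have hM := le_max_left ((l'.length + 1) / 2) ((l.length + 1) / 2)
  have hM' := le_max_right ((l'.length + 1) / 2) ((l.length + 1) / 2)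
  unfold nimSum
  rw [← foldr_xor_ofFn_eq_of_le _ hM fun j => rem_eq_zero_of_le,
    ← foldr_xor_ofFn_eq_of_le _ hM' fun j => rem_eq_zero_of_le, h]

/-- from a position whose remnant has nim-sum `0`, if the opponent
reduces an even-numbered row by `k`, reducing the row above by `k` is a valid RIT
move restoring the remnant, hence its nim-sum is again `0`. -/
theorem stmt_9 (l : List ℕ) (hl : IsPartition l) (hP : nimSum l = 0)
    (i k : ℕ) (hk : 0 < k) (hi : 2 * i + 1 < l.length)
    (hkle : k ≤ part l (2 * i + 1))
    (hchain : (l.set (2 * i + 1) (part l (2 * i + 1) - k)).Chain' (· ≥ ·)) :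
    RitMove ((l.set (2 * i + 1) (part l (2 * i + 1) - k)).filter (fun x => x ≠ 0))
      ((((l.set (2 * i + 1) (part l (2 * i + 1) - k)).filter (fun x => x ≠ 0)).set
          (2 * i) (part l (2 * i) - k)).filter (fun x => x ≠ 0)) ∧
    rem ((((l.set (2 * i + 1) (part l (2 * i + 1) - k)).filter (fun x => x ≠ 0)).set
          (2 * i) (part l (2 * i) - k)).filter (fun x => x ≠ 0)) = rem l ∧
    nimSum ((((l.set (2 * i + 1) (part l (2 * i + 1) - k)).filter (fun x => x ≠ 0)).set
          (2 * i) (part l (2 * i) - k)).filter (fun x => x ≠ 0)) = 0 := by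
  have hrows : part l (2 * i + 1) ≤ part l (2 * i) :=
    isChain_ge_iff_antitone_part.1 hl.1 (Nat.le_succ _)
  set M := (l.set (2 * i + 1) (part l (2 * i + 1) - k)).filter (fun x => x ≠ 0)
  have hM : part M = update (part l) (2 * i + 1) (part l (2 * i + 1) - k) := by
    rw [part_filter_ne_zero hchain, part_set _ hi]
  have hM2i : part M (2 * i) = part l (2 * i) := by rw [hM, update_of_ne (by omega)]
  have hM2i1 : part M (2 * i + 1) = part l (2 * i + 1) - k := by rw [hM, update_self]
  have hMchain : M.IsChain (· ≥ ·) := List.IsChain.sublist hchain List.filter_sublist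
  have h2i : 2 * i < M.length := lt_length_of_part_pos (by omega)
  have hLchain : (M.set (2 * i) (part l (2 * i) - k)).IsChain (· ≥ ·) :=
    isChain_ge_set hMchain h2i (by omega) (by omega)
  have hrem : rem ((M.set (2 * i) (part l (2 * i) - k)).filter (fun x => x ≠ 0)) = rem l :=
    rem_eq_of_part_eq_sub_rows hkle (by rw [part_filter_ne_zero hLchain, part_set _ h2i, hM])
  exact ⟨⟨2 * i, _, h2i, by omega, hLchain, rfl⟩, hrem,
    (nimSum_eq_of_rem_eq hrem).trans hP⟩
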